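/- arXiv:2209.05543 — 3 statements merged into one kernel-verified Lean document; each statement's English description precedes it below -/
import Mathlib

section
/- In the abstract setting where for each τ in an open subset K₊ of a Banach space K, P_τ : K → L(H) is the solution operator defined by B_τ(P_τ(η)y, v) = −B_η(y,v), the map τ ↦ P_τ is Fréchet differentiable with derivative D_τ P_τ(·; η) = P_τ(η) ∘ P_τ(·), i.e., for fixed ξ ∈ K, D_τ[P_τ(ξ)](η) = P_τ(η) P_τ(ξ) as operators on H. -/
/-!
Write `w = P_s(ξ)y − P_τ(ξ)y − P_τ(s − τ)P_τ(ξ)y`. Splitting `B_s = B_τ + B_{s−τ}` and using the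
defining equations of `P_s` and `P_τ` gives `B_s(w, v) = −B_{s−τ}(P_τ(s − τ)P_τ(ξ)y, v)`. Testing
with `v = w`, coercivity of `B_s` (uniform for `s` near `τ`) and boundedness of `B` yield
`‖w‖ = O(‖s − τ‖² ‖y‖)`, which is Fréchet differentiability with the stated derivative.
-/

open Topology Asymptotics

theorem hasFDerivAt_of_norm_sub_le_sq {𝕜 E F : Type*} [NontriviallyNormedField 𝕜]
    [NormedAddCommGroup E] [NormedSpace 𝕜 E] [NormedAddCommGroup F] [NormedSpace 𝕜 F]
    {f : E → F} {L : E →L[𝕜] F} {x : E} (M : ℝ)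
    (h : ∀ᶠ y in 𝓝 x, ‖f y - f x - L (y - x)‖ ≤ M * ‖y - x‖ ^ 2) :
    HasFDerivAt f L x := by
  refine .of_isLittleO <|
    (IsBigO.of_bound M ?_).trans_isLittleO (isLittleO_pow_sub_sub x one_lt_two)
  filter_upwards [h] with y hy
  simpa using hy

theorem mul_le_of_mul_sq_le_mul {c a x : ℝ} (hx : 0 ≤ x) (ha : 0 ≤ a) (h : c * x ^ 2 ≤ a * x) :
    c * x ≤ a := by
  rcases hx.eq_or_lt with rfl | hx
  · simpa using ha
  · exact le_of_mul_le_mul_right (by linarith) hx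

/-- With `B η u` standing for `B_η(u, v)` at a fixed test vector `v`, `u_s`, `u_τ` and `z` for
`P_s(ξ)y`, `P_τ(ξ)y` and `P_τ(s − τ)P_τ(ξ)y`. -/
theorem remainder_eq_neg_of_solutions {H K R : Type*} [AddCommGroup H] [AddCommGroup K]
    [CommRing R] {B : K → H → R}
    (hB_add₁ : ∀ η u u', B η (u + u') = B η u + B η u')
    (hB_add₂ : ∀ η η' u, B (η + η') u = B η u + B η' u)
    {s τ : K} {u_s u_τ z : H} {b : R} (hs : B s u_s = b) (hτ : B τ u_τ = b)
    (hz : B τ z = -B (s - τ) u_τ) :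
    B s (u_s - u_τ - z) = -B (s - τ) z := by
  have hsub : ∀ η u u', B η (u - u') = B η u - B η u' := fun η =>
    map_sub (AddMonoidHom.mk' (B η) (hB_add₁ η))
  have hsplit : ∀ u, B s u = B τ u + B (s - τ) u := fun u => by
    rw [← hB_add₂, add_sub_cancel]
  rw [hsub, hsub, hs, hsplit u_τ, hsplit z, hτ, hz]
  ring

theorem norm_solutionOperator_remainder_le {H K : Type*} [NormedAddCommGroup H]
    [NormedSpace ℂ H] [NormedAddCommGroup K] [NormedSpace ℂ K]
    {Bform : K → H → H → ℂ} {P : K → K →L[ℂ] (H →L[ℂ] H)}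
    (hB_add₁ : ∀ η u u' v, Bform η (u + u') v = Bform η u v + Bform η u' v)
    (hB_add₂ : ∀ η η' u v, Bform (η + η') u v = Bform η u v + Bform η' u v)
    {C : ℝ} (hC : 0 ≤ C) (hB_bdd : ∀ η u v, ‖Bform η u v‖ ≤ C * ‖η‖ * ‖u‖ * ‖v‖)
    {s τ : K} (hPs : ∀ (η : K) (y v : H), Bform s (P s η y) v = -Bform η y v)
    (hPτ : ∀ (η : K) (y v : H), Bform τ (P τ η y) v = -Bform η y v)
    {c : ℝ} (hc : 0 < c) (hcoer : ∀ v : H, c * ‖v‖ ^ 2 ≤ (Bform s v v).re) (ξ : K) :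
    ‖P s ξ - P τ ξ - (P τ (s - τ)).comp (P τ ξ)‖
      ≤ C * ‖P τ‖ * ‖P τ ξ‖ / c * ‖s - τ‖ ^ 2 := by
  refine ContinuousLinearMap.opNorm_le_bound _ (by positivity) fun y => ?_
  set z := P τ (s - τ) (P τ ξ y)
  set w := P s ξ y - P τ ξ y - z
  have hz : ‖z‖ ≤ ‖P τ‖ * ‖s - τ‖ * (‖P τ ξ‖ * ‖y‖) :=
    (P τ (s - τ)).le_of_opNorm_le ((P τ).le_opNorm _) _ |>.trans <| by
      gcongr; exact (P τ ξ).le_opNorm y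
  have hw_eq : Bform s w w = -Bform (s - τ) z w :=
    remainder_eq_neg_of_solutions (B := fun η u => Bform η u w) (hB_add₁ · · · w)
      (hB_add₂ · · · w) (hPs ξ y w) (hPτ ξ y w) (hPτ (s - τ) (P τ ξ y) w)
  have hw : c * ‖w‖ ^ 2 ≤ (C * ‖P τ‖ * ‖P τ ξ‖ * ‖s - τ‖ ^ 2 * ‖y‖) * ‖w‖ :=
    calc c * ‖w‖ ^ 2 ≤ (Bform s w w).re := hcoer w
      _ ≤ ‖Bform s w w‖ := Complex.re_le_norm _
      _ = ‖Bform (s - τ) z w‖ := by rw [hw_eq, norm_neg]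
      _ ≤ C * ‖s - τ‖ * ‖z‖ * ‖w‖ := hB_bdd _ _ _
      _ ≤ C * ‖s - τ‖ * (‖P τ‖ * ‖s - τ‖ * (‖P τ ξ‖ * ‖y‖)) * ‖w‖ := by gcongr
      _ = _ := by ring
  change ‖w‖ ≤ _
  calc ‖w‖ = c * ‖w‖ / c := by field_simp
    _ ≤ C * ‖P τ‖ * ‖P τ ξ‖ * ‖s - τ‖ ^ 2 * ‖y‖ / c :=
      div_le_div_of_nonneg_right (mul_le_of_mul_sq_le_mul (norm_nonneg w) (by positivity) hw) hc.le
    _ = _ := by ring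

theorem stmt2_general
    {H : Type*} [NormedAddCommGroup H] [InnerProductSpace ℂ H]
    {K : Type*} [NormedAddCommGroup K] [NormedSpace ℂ K]
    -- family of sesquilinear forms, linear in the parameter
    (Bform : K → H → H → ℂ)
    (hB_linη : ∀ (a : ℂ) (η η' : K) u v,
      Bform (a • η + η') u v = a * Bform η u v + Bform η' u v)
    (hB_add1 : ∀ η u u' v, Bform η (u + u') v = Bform η u v + Bform η u' v)
    (C : ℝ) (hB_bdd : ∀ η u v, ‖Bform η u v‖ ≤ C * ‖η‖ * ‖u‖ * ‖v‖)
    -- the open set of admissible parameters, with locally uniform coercivity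
    (Kplus : Set K) (hKplus : IsOpen Kplus)
    (hcoer : ∀ τ ∈ Kplus, ∃ c > 0, ∃ U ∈ nhds τ,
      ∀ τ' ∈ U, ∀ v : H, c * ‖v‖ ^ 2 ≤ (Bform τ' v v).re)
    -- the solution operator P, defined by B_τ(P_τ(η)y, v) = −B_η(y, v) on K₊
    (P : K → K →L[ℂ] (H →L[ℂ] H))
    (hP : ∀ τ ∈ Kplus, ∀ (η : K) (y v : H), Bform τ (P τ η y) v = - Bform η y v) :
    ∀ τ ∈ Kplus, ∀ ξ : K,
      ∃ D : K →L[ℂ] (H →L[ℂ] H),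
        (∀ η : K, D η = (P τ η).comp (P τ ξ)) ∧
        HasFDerivAt (fun s : K => P s ξ) D τ := by
  intro τ hτ ξ
  have hB_add₂ : ∀ η η' u v, Bform (η + η') u v = Bform η u v + Bform η' u v :=
    fun η η' u v => by simpa using hB_linη 1 η η' u v
  have hB_bdd' : ∀ η u v, ‖Bform η u v‖ ≤ max C 0 * ‖η‖ * ‖u‖ * ‖v‖ := fun η u v =>
    (hB_bdd η u v).trans (by gcongr; exact le_max_left C 0)
  obtain ⟨c, hc, U, hU, hcoerU⟩ := hcoer τ hτ
  refine ⟨((ContinuousLinearMap.compL ℂ H H H).flip (P τ ξ)).comp (P τ), fun η => rfl, ?_⟩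
  refine hasFDerivAt_of_norm_sub_le_sq (max C 0 * ‖P τ‖ * ‖P τ ξ‖ / c) ?_
  filter_upwards [hU, hKplus.mem_nhds hτ] with s hsU hs
  exact norm_solutionOperator_remainder_le hB_add1 hB_add₂ (le_max_right C 0) hB_bdd' (hP s hs)
    (hP τ hτ) hc (hcoerU s hsU) ξ

/-- Fréchet differentiability of the solution operator `τ ↦ P_τ(ξ)` with derivative
`D_τ P_τ(ξ)(η) = P_τ(η) ∘ P_τ(ξ)` (Lemma 2.1 of the paper, abstract setting). -/
theorem stmt2
    {H : Type*} [NormedAddCommGroup H] [InnerProductSpace ℂ H] [CompleteSpace H]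
    {K : Type*} [NormedAddCommGroup K] [NormedSpace ℂ K]
    -- family of sesquilinear forms, linear in the parameter
    (Bform : K → H → H → ℂ)
    (hB_linη : ∀ (a : ℂ) (η η' : K) u v,
      Bform (a • η + η') u v = a * Bform η u v + Bform η' u v)
    (hB_add1 : ∀ η u u' v, Bform η (u + u') v = Bform η u v + Bform η u' v)
    (hB_smul1 : ∀ η (a : ℂ) u v, Bform η (a • u) v = a * Bform η u v)
    (hB_add2 : ∀ η u v v', Bform η u (v + v') = Bform η u v + Bform η u v')
    (hB_smul2 : ∀ η (a : ℂ) u v, Bform η u (a • v) = (starRingEnd ℂ) a * Bform η u v)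
    (C : ℝ) (hB_bdd : ∀ η u v, ‖Bform η u v‖ ≤ C * ‖η‖ * ‖u‖ * ‖v‖)
    -- the open set of admissible parameters, with locally uniform coercivity
    (Kplus : Set K) (hKplus : IsOpen Kplus)
    (hcoer : ∀ τ ∈ Kplus, ∃ c > 0, ∃ U ∈ nhds τ,
      ∀ τ' ∈ U, ∀ v : H, c * ‖v‖ ^ 2 ≤ (Bform τ' v v).re)
    -- the solution operator P, defined by B_τ(P_τ(η)y, v) = −B_η(y, v) on K₊
    (P : K → K →L[ℂ] (H →L[ℂ] H))
    (hP : ∀ τ ∈ Kplus, ∀ (η : K) (y v : H), Bform τ (P τ η y) v = - Bform η y v) :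
    ∀ τ ∈ Kplus, ∀ ξ : K,
      ∃ D : K →L[ℂ] (H →L[ℂ] H),
        (∀ η : K, D η = (P τ η).comp (P τ ξ)) ∧
        HasFDerivAt (fun s : K => P s ξ) D τ :=
  stmt2_general Bform hB_linη hB_add1 C hB_bdd Kplus hKplus hcoer P hP
end

section
/- With the solution operator bound ‖P_τ‖_{L(K, L(H))} ≤ C/c(τ) and ‖N(τ)‖ ≤ C_H/c(τ), the k-th Fréchet derivative of N satisfies ‖D^k N(τ)‖_{L^k(K, L(X,H))} ≤ k! C^k C_H / c(τ)^{k+1} for all k ∈ ℕ. -/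
/-! Each of the `k!` terms of the derivative formula is a product of `k` operators
`P_τ(η_{α(i)})` of norm at most `(C/c) ‖η_{α(i)}‖` followed by `N(τ)` of norm at most `C_H/c`,
so it has norm at most `(C/c)^k (C_H/c) ∏ ‖η_i‖`. -/

open Finset

section PermutationSum

variable {𝕜 : Type*} [NontriviallyNormedField 𝕜]
  {H : Type*} [SeminormedAddCommGroup H] [NormedSpace 𝕜 H]
  {X : Type*} [SeminormedAddCommGroup X] [NormedSpace 𝕜 X]
  {K : Type*} [SeminormedAddCommGroup K] [NormedSpace 𝕜 K]

theorem ContinuousLinearMap.norm_list_prod_comp_le (l : List (H →L[𝕜] H)) (N : X →L[𝕜] H) :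
    ‖l.prod.comp N‖ ≤ (l.map norm).prod * ‖N‖ := by
  induction l with
  | nil => simp [ContinuousLinearMap.one_def]
  | cons a l ih =>
    rw [List.prod_cons, List.map_cons, List.prod_cons, mul_assoc]
    exact (opNorm_comp_le a (l.prod.comp N)).trans (by gcongr)

theorem ContinuousLinearMap.norm_ofFn_prod_comp_le {k : ℕ} (A : Fin k → H →L[𝕜] H)
    (N : X →L[𝕜] H) : ‖(List.ofFn A).prod.comp N‖ ≤ (∏ i, ‖A i‖) * ‖N‖ := by
  simpa [List.map_ofFn, List.prod_ofFn] using norm_list_prod_comp_le (List.ofFn A) N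

theorem norm_sum_perm_ofFn_prod_comp_le {k : ℕ} (P : K →L[𝕜] (H →L[𝕜] H)) (N : X →L[𝕜] H)
    {p n : ℝ} (hP : ∀ η, ‖P η‖ ≤ p * ‖η‖) (hN : ‖N‖ ≤ n) (η : Fin k → K) :
    ‖(∑ α : Equiv.Perm (Fin k), (List.ofFn fun i => P (η (α i))).prod).comp N‖ ≤
      k.factorial * p ^ k * n * ∏ i, ‖η i‖ := by
  have hterm : ∀ α : Equiv.Perm (Fin k),
      ‖(List.ofFn fun i => P (η (α i))).prod.comp N‖ ≤ p ^ k * (∏ i, ‖η i‖) * n := by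
    intro α
    calc ‖(List.ofFn fun i => P (η (α i))).prod.comp N‖
        ≤ (∏ i, ‖P (η (α i))‖) * ‖N‖ := ContinuousLinearMap.norm_ofFn_prod_comp_le _ N
      _ ≤ (∏ i, p * ‖η (α i)‖) * n := by
        gcongr with i
        · exact prod_nonneg fun i _ => (norm_nonneg _).trans (hP _)
        · exact hP _
      _ = p ^ k * (∏ i, ‖η i‖) * n := by
        rw [prod_mul_distrib, prod_const, card_univ, Fintype.card_fin,
          Equiv.prod_comp α fun i => ‖η i‖]
  calc ‖(∑ α : Equiv.Perm (Fin k), (List.ofFn fun i => P (η (α i))).prod).comp N‖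
      = ‖∑ α : Equiv.Perm (Fin k), (List.ofFn fun i => P (η (α i))).prod.comp N‖ := by
        rw [ContinuousLinearMap.finsetSum_comp]
    _ ≤ ∑ _α : Equiv.Perm (Fin k), p ^ k * (∏ i, ‖η i‖) * n :=
        (norm_sum_le _ _).trans (sum_le_sum fun α _ => hterm α)
    _ = k.factorial * p ^ k * n * ∏ i, ‖η i‖ := by
        rw [sum_const, card_univ, Fintype.card_perm, Fintype.card_fin, nsmul_eq_mul]
        ring

theorem ContinuousMultilinearMap.norm_le_of_eq_sum_perm_ofFn_prod_comp {k : ℕ}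
    (f : ContinuousMultilinearMap 𝕜 (fun _ : Fin k => K) (X →L[𝕜] H))
    (P : K →L[𝕜] (H →L[𝕜] H)) (N : X →L[𝕜] H) {p n : ℝ} (hp : 0 ≤ p)
    (hP : ∀ η, ‖P η‖ ≤ p * ‖η‖) (hN : ‖N‖ ≤ n)
    (hf : ∀ η, f η = (∑ α : Equiv.Perm (Fin k), (List.ofFn fun i => P (η (α i))).prod).comp N) :
    ‖f‖ ≤ k.factorial * p ^ k * n := by
  have hn : 0 ≤ n := (norm_nonneg N).trans hN
  refine opNorm_le_bound (by positivity) fun η => ?_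
  rw [hf η]
  exact norm_sum_perm_ofFn_prod_comp_le P N hP hN η

end PermutationSum

theorem stmt5_general
    {H : Type*} [NormedAddCommGroup H] [InnerProductSpace ℂ H]
    {X : Type*} [NormedAddCommGroup X] [InnerProductSpace ℂ X]
    {K : Type*} [NormedAddCommGroup K] [NormedSpace ℂ K]
    (N : K → X →L[ℂ] H) (P : K → K →L[ℂ] (H →L[ℂ] H))
    (τ : K) (C CH c : ℝ) (hC : 0 ≤ C) (hc : 0 < c)
    (hPbound : ∀ η : K, ‖P τ η‖ ≤ C * ‖η‖ / c)
    (hNbound : ‖N τ‖ ≤ CH / c)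
    -- the k-th derivative formula of Theorem 2.2
    (hderiv : ∀ (k : ℕ) (η : Fin k → K),
      (iteratedFDeriv ℂ k N τ) η =
        (∑ α : Equiv.Perm (Fin k),
          (List.ofFn fun i => P τ (η (α i))).prod).comp (N τ)) :
    ∀ k : ℕ, ‖iteratedFDeriv ℂ k N τ‖ ≤ (k.factorial : ℝ) * C ^ k * CH / c ^ (k + 1) := by
  intro k
  have hP : ∀ η : K, ‖P τ η‖ ≤ C / c * ‖η‖ := fun η => by
    rw [div_mul_eq_mul_div]
    exact hPbound η
  calc ‖iteratedFDeriv ℂ k N τ‖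
      ≤ k.factorial * (C / c) ^ k * (CH / c) :=
        (iteratedFDeriv ℂ k N τ).norm_le_of_eq_sum_perm_ofFn_prod_comp (P τ) (N τ)
          (div_nonneg hC hc.le) hP hNbound (hderiv k)
    _ = k.factorial * C ^ k * CH / c ^ (k + 1) := by ring

/-- Derivative bounds (2.14): with `‖P_τ(η)‖ ≤ C‖η‖/c(τ)` and `‖N(τ)‖ ≤ C_H/c(τ)`, the
`k`-th Fréchet derivative of `N` satisfies `‖D^k N(τ)‖ ≤ k! C^k C_H / c(τ)^{k+1}`. -/
theorem stmt5
    {H : Type*} [NormedAddCommGroup H] [InnerProductSpace ℂ H] [CompleteSpace H]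
    {X : Type*} [NormedAddCommGroup X] [InnerProductSpace ℂ X] [FiniteDimensional ℂ X]
    {K : Type*} [NormedAddCommGroup K] [NormedSpace ℂ K]
    (N : K → X →L[ℂ] H) (P : K → K →L[ℂ] (H →L[ℂ] H))
    (τ : K) (C CH c : ℝ) (hC : 0 ≤ C) (hCH : 0 ≤ CH) (hc : 0 < c)
    (hPbound : ∀ η : K, ‖P τ η‖ ≤ C * ‖η‖ / c)
    (hNbound : ‖N τ‖ ≤ CH / c)
    -- the k-th derivative formula of Theorem 2.2
    (hderiv : ∀ (k : ℕ) (η : Fin k → K),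
      (iteratedFDeriv ℂ k N τ) η =
        (∑ α : Equiv.Perm (Fin k),
          (List.ofFn fun i => P τ (η (α i))).prod).comp (N τ)) :
    ∀ k : ℕ, ‖iteratedFDeriv ℂ k N τ‖ ≤ (k.factorial : ℝ) * C ^ k * CH / c ^ (k + 1) :=
  stmt5_general N P τ C CH c hC hc hPbound hNbound hderiv
end

section
/- In the setting of the previous statement, define η₂ := −(1/2) M D²Λ̃(0; η₁, η₁). Then η₂ = −(1/2) M D²Λ̃(0; υ, υ) + O(‖υ‖³), η₂ = O(‖υ‖²), and ‖η₁ + η₂ − υ‖_B ≤ C‖υ‖_B³ for small υ ∈ W. -/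
/-!
The mean value inequality, applied in turn to `D²Λ`, to `DΛ` minus its linearisation at `0` and
to `Λ` minus its quadratic Taylor polynomial, raises the order of the bound by one each time and
gives `Λ υ - Λ 0 = F υ + ½ D²Λ(0; υ, υ) + O(‖υ‖³)`. Applying `M`, which inverts `F` on `W`, gives
`η₁ = υ - q(υ) + O(‖υ‖³)` with `q(υ) = -½ M D²Λ(0; υ, υ) = O(‖υ‖²)`. Since `η₁ - υ = O(‖υ‖²)` and
`η₁, υ = O(‖υ‖)`, replacing `υ` by `η₁` in the quadratic form costs only `O(‖υ‖³)`, so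
`η₂ = q(υ) + O(‖υ‖³)`, and the `q(υ)` terms cancel in `η₁ + η₂ - υ`.
-/

open Asymptotics Filter Metric Set Topology

theorem isBigO_norm_pow_of_le {α E : Type*} [SeminormedAddCommGroup E] {l : Filter α}
    {u : α → E} (hu : Tendsto u l (𝓝 0)) {m n : ℕ} (hmn : m ≤ n) :
    (fun x => ‖u x‖ ^ n) =O[l] fun x => ‖u x‖ ^ m := by
  refine IsBigO.of_bound 1 ?_
  filter_upwards [(tendsto_norm_zero.comp hu).eventually (eventually_le_nhds zero_lt_one)]
    with x hx
  simpa using pow_le_pow_of_le_one (norm_nonneg _) hx hmn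

section Taylor

variable {E F : Type*} [NormedAddCommGroup E] [NormedSpace ℝ E]
  [NormedAddCommGroup F] [NormedSpace ℝ F]

theorem norm_le_mul_norm_pow_succ_of_norm_fderiv_le {g : E → F} {g' : E → E →L[ℝ] F}
    {r K : ℝ} (n : ℕ) (hK : 0 ≤ K) (hg : ∀ y ∈ ball (0 : E) r, HasFDerivAt g (g' y) y)
    (hg' : ∀ y ∈ ball (0 : E) r, ‖g' y‖ ≤ K * ‖y‖ ^ n) (hg0 : g 0 = 0) :
    ∀ x ∈ ball (0 : E) r, ‖g x‖ ≤ K * ‖x‖ ^ (n + 1) := by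
  intro x hx
  have hsub : closedBall (0 : E) ‖x‖ ⊆ ball 0 r :=
    closedBall_subset_ball (by simpa using hx)
  have := (convex_closedBall (0 : E) ‖x‖).norm_image_sub_le_of_norm_hasFDerivWithin_le
    (C := K * ‖x‖ ^ n) (fun y hy => (hg y (hsub hy)).hasFDerivWithinAt)
    (fun y hy => (hg' y (hsub hy)).trans (by gcongr; simpa using hy))
    (mem_closedBall_self (norm_nonneg x)) (mem_closedBall_zero_iff.2 le_rfl)
  simpa [hg0, pow_succ, mul_assoc] using this

theorem ContinuousLinearMap.hasFDerivAt_half_apply_self {H : E →L[ℝ] E →L[ℝ] F}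
    (hH : ∀ v w, H v w = H w v) (a : E) :
    HasFDerivAt (fun z => (1 / 2 : ℝ) • H z z) (H a) a := by
  refine ((H.hasFDerivAt.clm_apply (hasFDerivAt_id a)).const_smul (1 / 2 : ℝ)).congr_fderiv
    ?_
  ext w
  simp only [one_div, comp_id, id_eq, smul_add, add_apply, smul_apply, flip_apply]
  rw [hH w a]
  module

theorem ContDiffAt.isBigO_sub_taylor_two {f : E → F} (hf : ContDiffAt ℝ 3 f 0) :
    (fun x => f x - f 0 - fderiv ℝ f 0 x - (1 / 2 : ℝ) • fderiv ℝ (fderiv ℝ f) 0 x x)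
      =O[𝓝 0] fun x => ‖x‖ ^ 3 := by
  set D₁ := fderiv ℝ f
  set D₂ := fderiv ℝ D₁
  set D₃ := fderiv ℝ D₂
  -- instance search does not reach the norm on `E →L[ℝ] E →L[ℝ] E →L[ℝ] F` unaided
  let _ : NormedAddCommGroup (E →L[ℝ] E →L[ℝ] F) := inferInstance
  let _ : NormedSpace ℝ (E →L[ℝ] E →L[ℝ] F) := inferInstance
  have hD₃ : ContinuousAt D₃ 0 :=
    (((hf.fderiv_right (m := 2) (by norm_num)).fderiv_right (m := 1) (by norm_num)).fderiv_right
      (m := 0) (by norm_num)).continuousAt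
  have hderivs : ∀ᶠ y in 𝓝 (0 : E), HasFDerivAt f (D₁ y) y ∧ HasFDerivAt D₁ (D₂ y) y ∧
      HasFDerivAt D₂ (D₃ y) y ∧ ‖D₃ y‖ < ‖D₃ 0‖ + 1 := by
    filter_upwards [hf.eventually (by simp), hD₃.norm.eventually_lt_const (lt_add_one _)]
      with y hy hy₃
    have hy₁ := hy.fderiv_right (m := 2) (by norm_num)
    have hy₂ := hy₁.fderiv_right (m := 1) (by norm_num)
    exact ⟨(hy.differentiableAt (by norm_num)).hasFDerivAt,
      (hy₁.differentiableAt (by norm_num)).hasFDerivAt,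
      (hy₂.differentiableAt (by norm_num)).hasFDerivAt, hy₃⟩
  obtain ⟨r, hr, hball⟩ := Metric.eventually_nhds_iff_ball.1 hderivs
  set K := ‖D₃ 0‖ + 1
  have hK : 0 ≤ K := by positivity
  have hsymm :=
    hf.isSymmSndFDerivAt (by simp only [minSmoothness_of_isRCLikeNormedField]; norm_num)
  have hD₂ : ∀ x ∈ ball (0 : E) r, ‖D₂ x - D₂ 0‖ ≤ K * ‖x‖ ^ 1 :=
    norm_le_mul_norm_pow_succ_of_norm_fderiv_le 0 hK
      (fun y hy => (hball y hy).2.2.1.sub_const _)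
      (fun y hy => by simpa using (hball y hy).2.2.2.le) (sub_self _)
  have hD₁ : ∀ x ∈ ball (0 : E) r, ‖D₁ x - D₁ 0 - D₂ 0 x‖ ≤ K * ‖x‖ ^ 2 :=
    norm_le_mul_norm_pow_succ_of_norm_fderiv_le 1 hK (g' := fun y => D₂ y - D₂ 0)
      (fun y hy => ((hball y hy).2.1.sub_const _).sub (D₂ 0).hasFDerivAt) hD₂ (by simp)
  have hD₀ : ∀ x ∈ ball (0 : E) r,
      ‖f x - f 0 - D₁ 0 x - (1 / 2 : ℝ) • D₂ 0 x x‖ ≤ K * ‖x‖ ^ 3 :=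
    norm_le_mul_norm_pow_succ_of_norm_fderiv_le 2 hK (g' := fun y => D₁ y - D₁ 0 - D₂ 0 y)
      (fun y hy => (((hball y hy).1.sub_const _).sub (D₁ 0).hasFDerivAt).sub
        (ContinuousLinearMap.hasFDerivAt_half_apply_self hsymm y)) hD₁ (by simp)
  exact IsBigO.of_bound K (eventually_of_mem (ball_mem_nhds 0 hr) fun x hx => by
    simpa using hD₀ x hx)

end Taylor

section Reversion

variable {α E F : Type*} [NormedAddCommGroup E] [NormedSpace ℝ E]
  [NormedAddCommGroup F] [NormedSpace ℝ F]

theorem ContinuousLinearMap.isBigO_apply_apply_sub_apply_apply (H : E →L[ℝ] E →L[ℝ] F)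
    {l : Filter α} {u v : α → E} (hu : Tendsto u l (𝓝 0))
    (huv : (fun x => v x - u x) =O[l] fun x => ‖u x‖ ^ 2) :
    (fun x => H (v x) (v x) - H (u x) (u x)) =O[l] fun x => ‖u x‖ ^ 3 := by
  have hv : v =O[l] fun x => ‖u x‖ := by
    simpa using (isBigO_norm_right.2 (isBigO_refl u l)).add
      (huv.trans ((isBigO_norm_pow_of_le hu (by norm_num : 1 ≤ 2)).congr_right (by simp)))
  have hsplit : (fun x => H (v x) (v x) - H (u x) (u x)) =
      fun x => H (v x - u x) (v x) + H (u x) (v x - u x) := by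
    ext x
    simp only [map_sub, sub_apply]
    abel
  rw [hsplit]
  refine IsBigO.add ?_ ?_
  · exact H.isBoundedBilinearMap.isBigO_comp.trans
      ((huv.norm_left.mul hv.norm_left).congr_right (by intro; ring))
  · exact H.isBoundedBilinearMap.isBigO_comp.trans
      (((isBigO_refl _ l).mul huv.norm_left).congr_right (by intro; ring))

noncomputable def reversionTerm₁ (M : F →L[ℝ] E) (Λ : E → F) (υ : E) : E :=
  M (Λ υ - Λ 0)

noncomputable def reversionTerm₂ (M : F →L[ℝ] E) (Λ : E → F) (υ : E) : E :=
  -((1 / 2 : ℝ) • M (fderiv ℝ (fderiv ℝ Λ) 0 (reversionTerm₁ M Λ υ) (reversionTerm₁ M Λ υ)))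

theorem isBigO_reversionTerm {Λ : E → F} {L : E →L[ℝ] F} {M : F →L[ℝ] E} {W : Submodule ℝ E}
    (hΛ : ContDiffAt ℝ 3 Λ 0) (hL : HasFDerivAt Λ L 0) (hM : ∀ w ∈ W, M (L w) = w) :
    (fun υ => reversionTerm₂ M Λ υ - -((1 / 2 : ℝ) • M (fderiv ℝ (fderiv ℝ Λ) 0 υ υ)))
        =O[𝓝[W] 0] (fun υ => ‖υ‖ ^ 3) ∧
      reversionTerm₂ M Λ =O[𝓝[W] 0] (fun υ => ‖υ‖ ^ 2) ∧
      (fun υ => reversionTerm₁ M Λ υ + reversionTerm₂ M Λ υ - υ)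
        =O[𝓝[W] 0] (fun υ => ‖υ‖ ^ 3) := by
  set H := fderiv ℝ (fderiv ℝ Λ) 0
  set l := 𝓝[(W : Set E)] (0 : E)
  set η₁ := reversionTerm₁ M Λ
  set η₂ := reversionTerm₂ M Λ
  set q := fun υ => -((1 / 2 : ℝ) • M (H υ υ))
  set R := fun υ => Λ υ - Λ 0 - L υ - (1 / 2 : ℝ) • H υ υ
  have hη₂ : ∀ υ, η₂ υ = -((1 / 2 : ℝ) • M (H (η₁ υ) (η₁ υ))) := fun _ => rfl
  have hl : Tendsto (fun υ : E => υ) l (𝓝 0) := nhdsWithin_le_nhds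
  have hR : (fun υ => M (R υ)) =O[l] fun υ => ‖υ‖ ^ 3 := by
    refine (M.isBigO_comp _ l).trans ?_
    simpa [R, hL.fderiv] using hΛ.isBigO_sub_taylor_two.mono nhdsWithin_le_nhds
  have hq : q =O[l] fun υ => ‖υ‖ ^ 2 :=
    (((M.isBigO_comp _ l).trans H.isBoundedBilinearMap.isBigO_comp).const_smul_left
      (1 / 2 : ℝ)).neg_left.congr_right (by simp [sq])
  have hdecomp : ∀ υ ∈ W, η₁ υ - υ = M (R υ) - q υ := by
    intro υ hυ
    simp only [η₁, reversionTerm₁, R, q, map_sub, map_smul, hM υ hυ]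
    abel
  have hη₁ : (fun υ => η₁ υ - υ) =O[l] fun υ => ‖υ‖ ^ 2 :=
    ((hR.trans (isBigO_norm_pow_of_le hl (by norm_num))).sub hq).congr'
      (eventually_nhdsWithin_of_forall fun υ hυ => (hdecomp υ hυ).symm) EventuallyEq.rfl
  have h₁ : (fun υ => η₂ υ - q υ) =O[l] fun υ => ‖υ‖ ^ 3 :=
    (((M.isBigO_comp _ l).trans (H.isBigO_apply_apply_sub_apply_apply hl hη₁)).const_smul_left
      (1 / 2 : ℝ)).neg_left.congr_left fun υ => by
        simp only [hη₂, q, map_sub, Pi.smul_apply, smul_sub]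
        abel
  refine ⟨h₁, ?_, ?_⟩
  · exact ((h₁.trans (isBigO_norm_pow_of_le hl (by norm_num))).add hq).congr_left (by simp)
  · refine (hR.add h₁).congr' (eventually_nhdsWithin_of_forall fun υ hυ => ?_) EventuallyEq.rfl
    dsimp only
    rw [show η₁ υ + η₂ υ - υ = (η₁ υ - υ) + η₂ υ by abel, hdecomp υ hυ]
    abel

end Reversion

theorem stmt11_general
    {B : Type*} [NormedAddCommGroup B] [NormedSpace ℝ B]
    {Y : Type*} [NormedAddCommGroup Y] [NormedSpace ℝ Y]
    (I : Set B) (hI : IsOpen I) (h0 : (0 : B) ∈ I)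
    (Λ : B → Y) (hΛ : ContDiffOn ℝ 4 Λ I)
    (F : B →L[ℝ] Y) (hF : HasFDerivAt Λ F 0)
    (W : Submodule ℝ B)
    (M : Y →L[ℝ] B) (hM : ∀ w ∈ W, M (F w) = w) :
    ∃ C : ℝ, ∃ δ > (0 : ℝ), ∀ υ ∈ W, ‖υ‖ < δ → segment ℝ 0 υ ⊆ I →
      let η₁ := M (Λ υ - Λ 0)
      let η₂ := -((1 / 2 : ℝ) • M ((iteratedFDeriv ℝ 2 Λ 0) ![η₁, η₁]))
      ‖η₂ - (-((1 / 2 : ℝ) • M ((iteratedFDeriv ℝ 2 Λ 0) ![υ, υ])))‖ ≤ C * ‖υ‖ ^ 3 ∧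
      ‖η₂‖ ≤ C * ‖υ‖ ^ 2 ∧
      ‖η₁ + η₂ - υ‖ ≤ C * ‖υ‖ ^ 3 := by
  have hΛ₀ : ContDiffAt ℝ 3 Λ 0 := (hΛ.contDiffAt (hI.mem_nhds h0)).of_le (by norm_num)
  obtain ⟨h₁, h₂, h₃⟩ := isBigO_reversionTerm hΛ₀ hF hM
  obtain ⟨c₁, hc₁⟩ := h₁.isBigOWith
  obtain ⟨c₂, hc₂⟩ := h₂.isBigOWith
  obtain ⟨c₃, hc₃⟩ := h₃.isBigOWith
  set C := max c₁ (max c₂ c₃)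
  have hC := (hc₁.weaken (c' := C) (by simp [C])).bound.and
    ((hc₂.weaken (c' := C) (by simp [C])).bound.and (hc₃.weaken (c' := C) (by simp [C])).bound)
  obtain ⟨δ, hδ, hδW⟩ := Metric.eventually_nhds_iff.1 (eventually_nhdsWithin_iff.1 hC)
  refine ⟨C, δ, hδ, fun υ hυ hυδ _ => ?_⟩
  simpa [iteratedFDeriv_two_apply, reversionTerm₂, reversionTerm₁] using
    hδW (by simpa using hυδ) hυ

/-- Second-order series-reversion estimate: with `η₁ = M(Λ̃(υ) − Λ̃(0))` and
`η₂ = −(1/2) M D²Λ̃(0; η₁, η₁)`, one has `η₂ = −(1/2) M D²Λ̃(0; υ, υ) + O(‖υ‖³)`,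
`η₂ = O(‖υ‖²)`, and `‖η₁ + η₂ − υ‖ ≤ C‖υ‖³` for small `υ ∈ W`. -/
theorem stmt11
    {B : Type*} [NormedAddCommGroup B] [NormedSpace ℝ B]
    {Y : Type*} [NormedAddCommGroup Y] [NormedSpace ℝ Y] [FiniteDimensional ℝ Y]
    (I : Set B) (hI : IsOpen I) (h0 : (0 : B) ∈ I)
    (Λ : B → Y) (hΛ : ContDiffOn ℝ 4 Λ I)
    (F : B →L[ℝ] Y) (hF : HasFDerivAt Λ F 0)
    (W : Submodule ℝ B) (hinj : ∀ x ∈ W, F x = 0 → x = 0)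
    (M : Y →L[ℝ] B) (hM : ∀ w ∈ W, M (F w) = w)
    (hMrange : ∀ y : Y, M y ∈ W) :
    ∃ C : ℝ, ∃ δ > (0 : ℝ), ∀ υ ∈ W, ‖υ‖ < δ → segment ℝ 0 υ ⊆ I →
      let η₁ := M (Λ υ - Λ 0)
      let η₂ := -((1 / 2 : ℝ) • M ((iteratedFDeriv ℝ 2 Λ 0) ![η₁, η₁]))
      ‖η₂ - (-((1 / 2 : ℝ) • M ((iteratedFDeriv ℝ 2 Λ 0) ![υ, υ])))‖ ≤ C * ‖υ‖ ^ 3 ∧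
      ‖η₂‖ ≤ C * ‖υ‖ ^ 2 ∧
      ‖η₁ + η₂ - υ‖ ≤ C * ‖υ‖ ^ 3 :=
  stmt11_general I hI h0 Λ hΛ F hF W M hM
end
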